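/- In H(n)^{O(n)}, for all j,k,l,m ≥ 0 the zeroth circle product Ω_{j,k} ∘_0 Ω_{l,m} of two quadratic generators is a total derivative (lies in the image of ∂). Concretely, via the OPE formula ω_{a,b} ∘_m ω_{c,d} = λ_{a,b,c,m} ω_{a+b+c+1−m,d} + λ_{a,b,d,m} ω_{c,a+b+d+1−m} with m = 0, every element of A_{2k+2l+1} (odd total degree) is in the image of ∂: A_{2k+2l} → A_{2k+2l+1}. -/

import Mathlib

/-!
The relation `∂ω_{a,b} = ω_{a+1,b} + ω_{a,b+1}` moves one unit of degree between the two indices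
modulo exact elements at the cost of a sign, so `ω_{a+j+1,b} + (-1)^j ω_{a,b+j+1}` is exact.
For `b = a` and `j` even this is `2 ω_{a,a+j+1}`, which gives surjectivity in odd degree.
For `j = a + b` it gives the circle product: `λ_{a,b,x,0} = (-1)^a + (-1)^b` does not depend on `x`
and absorbs the sign `(-1)^{a+b}` (it vanishes when `a + b` is odd).
-/

/-- The structure constant `λ_{a,b,c,m}`, with falling factorial quotients
interpreted as `0` when the lower argument would be negative. -/
noncomputable def lam (a b c m : ℕ) : ℂ :=
  (-1 : ℂ) ^ b * ((b + c + 1).descFactorial m : ℂ) +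
    (-1 : ℂ) ^ a * ((a + c + 1).descFactorial m : ℂ)

/-- The basis symbol `ω_{a,b} = ω_{b,a}`, modelled in `(ℕ × ℕ) →₀ ℂ`. -/
noncomputable def w (a b : ℕ) : (ℕ × ℕ) →₀ ℂ :=
  Finsupp.single (if a ≤ b then (a, b) else (b, a)) 1

/-- The graded piece `A_m`, the span of `{ω_{a,b} : a + b = m}`. -/
noncomputable def Asp (m : ℕ) : Submodule ℂ ((ℕ × ℕ) →₀ ℂ) :=
  Submodule.span ℂ {x | ∃ a b : ℕ, a + b = m ∧ x = w a b}

lemma w_symm (a b : ℕ) : w a b = w b a := by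
  unfold w
  rcases lt_trichotomy a b with h | rfl | h
  · rw [if_pos h.le, if_neg (by omega)]
  · rfl
  · rw [if_neg (by omega), if_pos h.le]

lemma w_mem_Asp {a b m : ℕ} (h : a + b = m) : w a b ∈ Asp m :=
  Submodule.subset_span ⟨a, b, h, rfl⟩

lemma lam_zero_mul_neg_one_pow (a b x y : ℕ) :
    lam a b x 0 * (-1 : ℂ) ^ (a + b) = lam a b y 0 := by
  simp only [lam, Nat.descFactorial_zero, Nat.cast_one, mul_one, pow_add]
  have sq_a : ((-1 : ℂ) ^ a) ^ 2 = 1 := by rw [← pow_mul, pow_mul', neg_one_sq, one_pow]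
  have sq_b : ((-1 : ℂ) ^ b) ^ 2 = 1 := by rw [← pow_mul, pow_mul', neg_one_sq, one_pow]
  linear_combination (-1 : ℂ) ^ b * sq_a + (-1 : ℂ) ^ a * sq_b

section

variable {D : ((ℕ × ℕ) →₀ ℂ) →ₗ[ℂ] ((ℕ × ℕ) →₀ ℂ)}

lemma map_Asp_le (hD : ∀ a b : ℕ, D (w a b) = w (a + 1) b + w a (b + 1)) (n : ℕ) :
    Submodule.map D (Asp n) ≤ Asp (n + 1) := by
  rw [Submodule.map_le_iff_le_comap, Asp, Submodule.span_le]
  rintro x ⟨a, b, rfl, rfl⟩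
  rw [SetLike.mem_coe, Submodule.mem_comap, hD]
  exact add_mem (w_mem_Asp (by omega)) (w_mem_Asp (by omega))

lemma w_add_neg_one_pow_smul_w_mem_map_Asp
    (hD : ∀ a b : ℕ, D (w a b) = w (a + 1) b + w a (b + 1)) (j : ℕ) :
    ∀ a b : ℕ, w (a + j + 1) b + (-1 : ℂ) ^ j • w a (b + j + 1) ∈
      Submodule.map D (Asp (a + b + j)) := by
  induction j with
  | zero =>
    intro a b
    rw [pow_zero, one_smul, ← hD]
    exact Submodule.mem_map_of_mem (w_mem_Asp rfl)
  | succ j ih =>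
    intro a b
    have shifted := ih (a + 1) b
    rw [show a + 1 + b + j = a + b + (j + 1) by omega] at shifted
    have step : D (w a (b + j + 1)) ∈ Submodule.map D (Asp (a + b + (j + 1))) :=
      Submodule.mem_map_of_mem (w_mem_Asp (by omega))
    rw [hD] at step
    have difference := sub_mem shifted (Submodule.smul_mem _ ((-1 : ℂ) ^ j) step)
    convert difference using 1
    rw [show a + 1 + j + 1 = a + (j + 1) + 1 by omega, show b + j + 1 + 1 = b + (j + 1) + 1 by omega,
      pow_succ, smul_add, mul_smul]
    simp only [neg_smul, one_smul, smul_neg]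
    abel

lemma w_mem_map_Asp_of_add_eq (hD : ∀ a b : ℕ, D (w a b) = w (a + 1) b + w a (b + 1))
    {r a b : ℕ} (hab : a + b = 2 * r + 1) : w a b ∈ Submodule.map D (Asp (2 * r)) := by
  wlog hle : a ≤ b generalizing a b
  · rw [w_symm]
    exact this (by omega) (by omega)
  obtain ⟨k, rfl⟩ : ∃ k, b = a + 2 * k + 1 := ⟨(b - a) / 2, by omega⟩
  have two_smul_mem := w_add_neg_one_pow_smul_w_mem_map_Asp hD (2 * k) a a
  rw [w_symm (a + 2 * k + 1), pow_mul, neg_one_sq, one_pow, one_smul,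
    ← two_smul ℂ (w a (a + 2 * k + 1)), show a + a + 2 * k = 2 * r by omega] at two_smul_mem
  simpa using Submodule.smul_mem _ (2⁻¹ : ℂ) two_smul_mem

end

/-- In `H(n)^{O(n)}`, the zeroth circle product of two quadratic generators is a
total derivative.  With `∂(ω_{a,b}) = ω_{a+1,b} + ω_{a,b+1}`:
(i) `∂ : A_{2r} → A_{2r+1}` is surjective for every `r ≥ 0`; and
(ii) via the OPE formula `ω_{a,b} ∘_0 ω_{c,d} = λ_{a,b,c,0} ω_{a+b+c+1,d} + λ_{a,b,d,0} ω_{c,a+b+d+1}`,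
each such product lies in the image of `∂` (applied to the graded piece of the
appropriate degree). -/
theorem circle_zero_total_derivative
    (D : ((ℕ × ℕ) →₀ ℂ) →ₗ[ℂ] ((ℕ × ℕ) →₀ ℂ))
    (hD : ∀ a b : ℕ, D (w a b) = w (a + 1) b + w a (b + 1)) :
    (∀ r : ℕ, Submodule.map D (Asp (2 * r)) = Asp (2 * r + 1)) ∧
    (∀ a b c d : ℕ,
      lam a b c 0 • w (a + b + c + 1) d + lam a b d 0 • w c (a + b + d + 1) ∈
        Submodule.map D (Asp (a + b + c + d))) := by
  refine ⟨fun r => le_antisymm (map_Asp_le hD _) ?_, fun a b c d => ?_⟩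
  · rw [Asp, Submodule.span_le]
    rintro x ⟨a, b, hab, rfl⟩
    exact w_mem_map_Asp_of_add_eq hD hab
  · have exact_pair := w_add_neg_one_pow_smul_w_mem_map_Asp hD (a + b) c d
    rw [show c + (a + b) + 1 = a + b + c + 1 by omega, show d + (a + b) + 1 = a + b + d + 1 by omega,
      show c + d + (a + b) = a + b + c + d by omega] at exact_pair
    convert Submodule.smul_mem _ (lam a b c 0) exact_pair using 1
    rw [smul_add, smul_smul, lam_zero_mul_neg_one_pow]
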